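/- Define h(a,b) = ∫_{ℝ^{d−1}} Ψ((|ũ| + 1 + 1/a)² b) / ( (|ũ| + 1)^{d+α} (|ũ| + 1 + 1/a)^{d+α} ) dũ for a, b > 0. For every M > 0 there exists a constant c ≥ 1, depending on M, such that: for all a ∈ (0, M) and b > 0, c^{−1} a^{d+α} Ψ(b/a²) ≤ h(a,b) ≤ c a^{d+α} Ψ(b/a²); and for all a ≥ M and b > 0, c^{−1} Ψ(b) ≤ h(a,b) ≤ c Ψ(b). -/

import Mathlib

open MeasureTheory

lemma psi_upper' {γ₂ C₂ : ℝ} {Ψ : ℝ → ℝ} (hC₂ : 0 < C₂)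
    (hpos : ∀ t : ℝ, 0 ≤ t → 0 < Ψ t)
    (hflat : ∀ t : ℝ, 0 ≤ t → t < 2 → Ψ t = Ψ 2)
    (hscaleU : ∀ r R : ℝ, 2 ≤ r → r < R → Ψ R / Ψ r ≤ C₂ * (R / r) ^ γ₂) :
    ∀ t T : ℝ, 0 < t → t ≤ T → Ψ T ≤ max C₂ 1 * (T / t) ^ max γ₂ 0 * Ψ t := by
  intro t T ht htT
  have hT : 0 < T := ht.trans_le htT
  have hratio : 1 ≤ T / t := (one_le_div ht).2 htT
  have hK : (1:ℝ) ≤ max C₂ 1 := le_max_right _ _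
  have hone : (1:ℝ) ≤ (T / t) ^ max γ₂ 0 :=
    Real.one_le_rpow hratio (le_max_right _ _)
  have htriv : Ψ T = Ψ t → Ψ T ≤ max C₂ 1 * (T / t) ^ max γ₂ 0 * Ψ t := by
    intro h; rw [h]
    have h1 : (1:ℝ) ≤ max C₂ 1 * (T / t) ^ max γ₂ 0 := by nlinarith
    nlinarith [hpos t ht.le]
  rcases lt_or_ge T 2 with hT2 | hT2
  · exact htriv (by rw [hflat T hT.le hT2, hflat t ht.le (lt_of_le_of_lt htT hT2)])
  · have hC₂K : C₂ ≤ max C₂ 1 := le_max_left _ _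
    rcases lt_or_ge t 2 with ht2 | ht2
    · rcases eq_or_lt_of_le hT2 with hT2e | hT2g
      · exact htriv (by rw [← hT2e, hflat t ht.le ht2])
      · have hΨ2pos := hpos 2 (by norm_num)
        have h2 : Ψ T ≤ C₂ * (T / 2) ^ γ₂ * Ψ 2 :=
          (div_le_iff₀ hΨ2pos).1 (hscaleU 2 T le_rfl hT2g)
        rw [hflat t ht.le ht2]
        refine h2.trans (mul_le_mul_of_nonneg_right ?_ hΨ2pos.le)
        rcases le_or_gt γ₂ 0 with hg | hg
        · have : (T / 2) ^ γ₂ ≤ 1 :=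
            Real.rpow_le_one_of_one_le_of_nonpos (by linarith [(one_le_div (by norm_num : (0:ℝ)<2)).2 hT2]) hg
          nlinarith
        · have hmax : max γ₂ 0 = γ₂ := max_eq_left hg.le
          rw [hmax]
          have hd : T / 2 ≤ T / t := by gcongr
          have h5 : (T / 2) ^ γ₂ ≤ (T / t) ^ γ₂ :=
            Real.rpow_le_rpow (by positivity) hd hg.le
          nlinarith [Real.rpow_nonneg (by positivity : (0:ℝ) ≤ T/2) γ₂]
    · rcases eq_or_lt_of_le htT with he | hlt
      · exact htriv (by rw [he])
      · have h2 : Ψ T ≤ C₂ * (T / t) ^ γ₂ * Ψ t :=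
          (div_le_iff₀ (hpos t ht.le)).1 (hscaleU t T ht2 hlt)
        refine h2.trans (mul_le_mul_of_nonneg_right ?_ (hpos t ht.le).le)
        have h5 : (T / t) ^ γ₂ ≤ (T / t) ^ max γ₂ 0 :=
          Real.rpow_le_rpow_of_exponent_le hratio (le_max_left _ _)
        nlinarith [Real.rpow_nonneg (by positivity : (0:ℝ) ≤ T/t) γ₂]

lemma psi_lower' {γ₁ C₁ : ℝ} {Ψ : ℝ → ℝ}
    (hC₁ : 0 < C₁)
    (hpos : ∀ t : ℝ, 0 ≤ t → 0 < Ψ t)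
    (hflat : ∀ t : ℝ, 0 ≤ t → t < 2 → Ψ t = Ψ 2)
    (hscaleL : ∀ r R : ℝ, 2 ≤ r → r < R → C₁ * (R / r) ^ γ₁ ≤ Ψ R / Ψ r) :
    ∀ t T : ℝ, 0 < t → t ≤ T → min C₁ 1 * (T / t) ^ min γ₁ 0 * Ψ t ≤ Ψ T := by
  intro t T ht htT
  have hT : 0 < T := ht.trans_le htT
  have hratio : 1 ≤ T / t := (one_le_div ht).2 htT
  have hK : min C₁ 1 ≤ 1 := min_le_right _ _
  have hKpos : 0 < min C₁ 1 := lt_min hC₁ one_pos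
  have hone : (T / t) ^ min γ₁ 0 ≤ 1 :=
    Real.rpow_le_one_of_one_le_of_nonpos hratio (min_le_right _ _)
  have htriv : Ψ T = Ψ t → min C₁ 1 * (T / t) ^ min γ₁ 0 * Ψ t ≤ Ψ T := by
    intro h; rw [h]
    have h1 : min C₁ 1 * (T / t) ^ min γ₁ 0 ≤ 1 := by
      nlinarith [Real.rpow_nonneg (by positivity : (0:ℝ) ≤ T/t) (min γ₁ 0)]
    nlinarith [hpos t ht.le]
  rcases lt_or_ge T 2 with hT2 | hT2
  · exact htriv (by rw [hflat T hT.le hT2, hflat t ht.le (lt_of_le_of_lt htT hT2)])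
  · have hC₁K : min C₁ 1 ≤ C₁ := min_le_left _ _
    rcases lt_or_ge t 2 with ht2 | ht2
    · rcases eq_or_lt_of_le hT2 with hT2e | hT2g
      · exact htriv (by rw [← hT2e, hflat t ht.le ht2])
      · have hΨ2pos := hpos 2 (by norm_num)
        have h2 : C₁ * (T / 2) ^ γ₁ * Ψ 2 ≤ Ψ T :=
          (le_div_iff₀ hΨ2pos).1 (hscaleL 2 T le_rfl hT2g)
        rw [hflat t ht.le ht2]
        refine le_trans (mul_le_mul_of_nonneg_right ?_ hΨ2pos.le) h2
        have h3 : (T / 2) ^ min γ₁ 0 ≤ (T / 2) ^ γ₁ :=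
          Real.rpow_le_rpow_of_exponent_le (by linarith [(one_le_div (by norm_num : (0:ℝ)<2)).2 hT2]) (min_le_left _ _)
        have hd : T / 2 ≤ T / t := by gcongr
        have h4 : (T / t) ^ min γ₁ 0 ≤ (T / 2) ^ min γ₁ 0 :=
          Real.rpow_le_rpow_of_nonpos (by positivity) hd (min_le_right _ _)
        nlinarith [Real.rpow_nonneg (by positivity : (0:ℝ) ≤ T/t) (min γ₁ 0)]
    · rcases eq_or_lt_of_le htT with he | hlt
      · exact htriv (by rw [he])
      · have h2 : C₁ * (T / t) ^ γ₁ * Ψ t ≤ Ψ T :=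
          (le_div_iff₀ (hpos t ht.le)).1 (hscaleL t T ht2 hlt)
        refine le_trans (mul_le_mul_of_nonneg_right ?_ (hpos t ht.le).le) h2
        have h3 : (T / t) ^ min γ₁ 0 ≤ (T / t) ^ γ₁ :=
          Real.rpow_le_rpow_of_exponent_le hratio (min_le_left _ _)
        nlinarith [Real.rpow_nonneg (by positivity : (0:ℝ) ≤ T/t) (min γ₁ 0)]

/-- The function `h(a,b)` of Lemma `l:k`, in dimension `d = n + 2` (integral over
`ℝ^{d-1} = ℝ^{n+1}`). -/
noncomputable def hker (n : ℕ) (α : ℝ) (Ψ : ℝ → ℝ) (a b : ℝ) : ℝ :=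
  ∫ u : EuclideanSpace ℝ (Fin (n + 1)),
    Ψ ((‖u‖ + 1 + 1 / a) ^ 2 * b) /
      ((‖u‖ + 1) ^ ((n : ℝ) + 2 + α) * (‖u‖ + 1 + 1 / a) ^ ((n : ℝ) + 2 + α))

set_option maxHeartbeats 1000000 in
lemma hker_core (n : ℕ) {α : ℝ} (Ψ : ℝ → ℝ)
    (hmeas : Measurable Ψ)
    (hpos : ∀ t : ℝ, 0 ≤ t → 0 < Ψ t)
    {K γ : ℝ} (hK0 : 0 ≤ K) (hγ0 : 0 ≤ γ) (hγq : 2 * γ ≤ (n:ℝ) + 2 + α)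
    (psiU : ∀ t T : ℝ, 0 < t → t ≤ T → Ψ T ≤ K * (T / t) ^ γ * Ψ t)
    {K₁ γ₁' : ℝ} (hK₁ : 0 < K₁) (hγ₁'0 : γ₁' ≤ 0)
    (psiL : ∀ t T : ℝ, 0 < t → t ≤ T → K₁ * (T / t) ^ γ₁' * Ψ t ≤ Ψ T)
    (hα : 0 < α)
    {a b : ℝ} (ha : 0 < a) (hb : 0 < b) :
    K₁ * (2:ℝ) ^ (2*γ₁' - 2*((n:ℝ)+2+α)) *
      (volume (Metric.closedBall (0 : EuclideanSpace ℝ (Fin (n+1))) 1)).toReal *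
      ((1 + 1/a) ^ (-((n:ℝ)+2+α)) * Ψ ((1 + 1/a)^2 * b)) ≤ hker n α Ψ a b ∧
    hker n α Ψ a b ≤ K * (∫ u : EuclideanSpace ℝ (Fin (n+1)), (1 + ‖u‖) ^ (-((n:ℝ)+2+α))) *
      ((1 + 1/a) ^ (-((n:ℝ)+2+α)) * Ψ ((1 + 1/a)^2 * b)) := by
  set E := EuclideanSpace ℝ (Fin (n+1)) with hEdef
  set q : ℝ := (n:ℝ) + 2 + α with hqdef
  have hq0 : 0 < q := by positivity
  set s : ℝ := 1 + 1/a with hsdef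
  have hs1 : 1 ≤ s := by rw [hsdef]; nlinarith [one_div_pos.2 ha]
  have hs0 : 0 < s := by linarith
  have hsb : 0 < s^2 * b := by positivity
  set f : E → ℝ := fun u => Ψ ((‖u‖ + 1 + 1/a)^2 * b) / ((‖u‖+1)^q * (‖u‖+1+1/a)^q)
    with hfdef
  have hkereq : hker n α Ψ a b = ∫ u : E, f u := rfl
  have harg : ∀ u : E, ‖u‖ + 1 + 1/a = ‖u‖ + s := fun u => by rw [hsdef]; ring
  have hfeq : ∀ u : E, f u = Ψ ((‖u‖+s)^2*b) / ((‖u‖+1)^q * (‖u‖+s)^q) := by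
    intro u; simp only [hfdef]; rw [harg u]
  have hfnn : ∀ u : E, 0 ≤ f u := by
    intro u
    rw [hfeq u]
    have h1 : 0 ≤ (‖u‖+s)^2*b := by positivity
    have h2 : (0:ℝ) < ‖u‖ + 1 := by nlinarith [norm_nonneg u]
    have h3 : (0:ℝ) < ‖u‖ + s := by nlinarith [norm_nonneg u]
    exact div_nonneg (hpos _ h1).le
      (mul_nonneg (Real.rpow_nonneg h2.le q) (Real.rpow_nonneg h3.le q))
  -- pointwise upper bound
  have hup : ∀ u : E, f u ≤ (K * Ψ (s^2*b) * s^(-q)) * (1 + ‖u‖)^(-q) := by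
    intro u
    rw [add_comm (1:ℝ) ‖u‖, hfeq u]
    set r : ℝ := ‖u‖ with hrdef
    have hr : 0 ≤ r := norm_nonneg u
    have hr1 : (0:ℝ) < r + 1 := by linarith
    have hrs : 0 < r + s := by linarith
    have h1 := psiU (s^2*b) ((r+s)^2*b) hsb
      (by nlinarith [mul_nonneg (mul_nonneg hr hr) hb.le, mul_nonneg (mul_nonneg hr hs0.le) hb.le])
    have hq1 : ((r+s)^2*b) / (s^2*b) = ((r+s)/s)^2 := by
      field_simp
    rw [hq1] at h1
    have hq2 : (((r+s)/s)^2 : ℝ) ^ γ = (r+s)^(2*γ) * s^(-(2*γ)) := by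
      rw [← Real.rpow_natCast ((r+s)/s) 2, ← Real.rpow_mul (by positivity)]
      push_cast
      rw [Real.div_rpow hrs.le hs0.le, Real.rpow_neg hs0.le, div_eq_mul_inv]
    rw [hq2] at h1
    have hdiv : Ψ ((r+s)^2*b) / ((r+1)^q * (r+s)^q)
        = Ψ ((r+s)^2*b) * (r+1)^(-q) * (r+s)^(-q) := by
      rw [Real.rpow_neg hr1.le, Real.rpow_neg hrs.le, div_eq_mul_inv, mul_inv]
      ring
    rw [hdiv]
    have h2 : Ψ ((r+s)^2*b) * (r+1)^(-q) * (r+s)^(-q)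
        ≤ (K * ((r+s)^(2*γ) * s^(-(2*γ))) * Ψ (s^2*b)) * (r+1)^(-q) * (r+s)^(-q) :=
      mul_le_mul_of_nonneg_right (mul_le_mul_of_nonneg_right h1 (Real.rpow_nonneg hr1.le _))
        (Real.rpow_nonneg hrs.le _)
    refine h2.trans ?_
    have h3 : (r+s)^(2*γ) * (r+s)^(-q) ≤ s^(2*γ) * s^(-q) := by
      rw [← Real.rpow_add hrs, ← Real.rpow_add hs0]
      exact Real.rpow_le_rpow_of_nonpos hs0 (le_add_of_nonneg_left hr) (by linarith)
    have h4 : s^(-(2*γ)) * (s^(2*γ) * s^(-q)) = s^(-q) := by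
      rw [← Real.rpow_add hs0, ← Real.rpow_add hs0]
      norm_num
    calc (K * ((r+s)^(2*γ) * s^(-(2*γ))) * Ψ (s^2*b)) * (r+1)^(-q) * (r+s)^(-q)
        = (K * Ψ (s^2*b) * s^(-(2*γ)) * (r+1)^(-q)) * ((r+s)^(2*γ) * (r+s)^(-q)) := by ring
      _ ≤ (K * Ψ (s^2*b) * s^(-(2*γ)) * (r+1)^(-q)) * (s^(2*γ) * s^(-q)) := by
          refine mul_le_mul_of_nonneg_left h3 ?_
          exact mul_nonneg (mul_nonneg (mul_nonneg hK0 (hpos _ hsb.le).le)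
            (Real.rpow_nonneg hs0.le _)) (Real.rpow_nonneg hr1.le _)
      _ = (K * Ψ (s^2*b) * s^(-q)) * (r+1)^(-q) := by
          rw [show (K * Ψ (s^2*b) * s^(-(2*γ)) * (r+1)^(-q)) * (s^(2*γ) * s^(-q))
              = (K * Ψ (s^2*b) * (r+1)^(-q)) * (s^(-(2*γ)) * (s^(2*γ) * s^(-q))) from by ring,
            h4]
          ring
  -- integrability
  have hnrq : ((Module.finrank ℝ E : ℝ)) < q := by
    have he : Module.finrank ℝ E = n + 1 := finrank_euclideanSpace_fin
    rw [he, hqdef]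
    push_cast
    linarith
  have hInt : Integrable (fun u : E => (1 + ‖u‖)^(-q)) := integrable_one_add_norm hnrq
  have hfm : AEStronglyMeasurable f (volume : Measure E) := by
    apply Measurable.aestronglyMeasurable
    rw [hfdef]
    fun_prop
  have hfi : Integrable f (volume : Measure E) := by
    refine (hInt.const_mul (K * Ψ (s^2*b) * s^(-q))).mono' hfm ?_
    filter_upwards with u
    rw [Real.norm_of_nonneg (hfnn u)]
    exact hup u
  -- upper bound
  have hU : ∫ u : E, f u ≤ K * (∫ u : E, (1+‖u‖)^(-q)) * (s^(-q) * Ψ (s^2*b)) := by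
    have h5 := integral_mono hfi (hInt.const_mul (K * Ψ (s^2*b) * s^(-q))) hup
    rw [integral_const_mul] at h5
    calc ∫ u : E, f u ≤ (K * Ψ (s^2*b) * s^(-q)) * ∫ u : E, (1+‖u‖)^(-q) := h5
      _ = K * (∫ u : E, (1+‖u‖)^(-q)) * (s^(-q) * Ψ (s^2*b)) := by ring
  -- pointwise lower bound on the unit ball
  have hlo : ∀ u : E, ‖u‖ ≤ 1 → (K₁ * (2:ℝ)^(2*γ₁' - 2*q) * s^(-q) * Ψ (s^2*b)) ≤ f u := by
    intro u hu
    rw [hfeq u]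
    set r : ℝ := ‖u‖ with hrdef
    have hr : 0 ≤ r := norm_nonneg u
    have hr1 : (0:ℝ) < r + 1 := by linarith
    have hrs : 0 < r + s := by linarith
    have h1 := psiL (s^2*b) ((r+s)^2*b) hsb
      (by nlinarith [mul_nonneg (mul_nonneg hr hr) hb.le, mul_nonneg (mul_nonneg hr hs0.le) hb.le])
    have hq1 : ((r+s)^2*b) / (s^2*b) = ((r+s)/s)^2 := by field_simp
    rw [hq1] at h1
    have hx4 : ((r+s)/s)^2 ≤ 4 := by
      have hd2 : (r+s)/s ≤ 2 := by rw [div_le_iff₀ hs0]; linarith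
      nlinarith [div_nonneg hrs.le hs0.le]
    have h2 : (4:ℝ)^γ₁' ≤ (((r+s)/s)^2)^γ₁' :=
      Real.rpow_le_rpow_of_nonpos (by positivity) hx4 hγ₁'0
    have h24 : (4:ℝ)^γ₁' = (2:ℝ)^(2*γ₁') := by
      rw [show (4:ℝ) = 2^(2:ℕ) from by norm_num, ← Real.rpow_natCast 2 2,
        ← Real.rpow_mul (by norm_num)]
      norm_num
    have hnum : K₁ * (2:ℝ)^(2*γ₁') * Ψ (s^2*b) ≤ Ψ ((r+s)^2*b) := by
      refine le_trans ?_ h1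
      rw [← h24]
      exact mul_le_mul_of_nonneg_right (mul_le_mul_of_nonneg_left h2 hK₁.le) (hpos _ hsb.le).le
    have h2q : (2:ℝ)^q * (2:ℝ)^q = (2:ℝ)^(2*q) := by
      rw [← Real.rpow_add (by norm_num : (0:ℝ) < 2)]
      norm_num [two_mul]
    have hsq : (0:ℝ) < s^q := Real.rpow_pos_of_pos hs0 q
    have h2qpos : (0:ℝ) < (2:ℝ)^(2*q) := Real.rpow_pos_of_pos (by norm_num) _
    have heq : (K₁ * (2:ℝ)^(2*γ₁') * Ψ (s^2*b)) / ((2:ℝ)^q * (2*s)^q)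
        = K₁ * (2:ℝ)^(2*γ₁'-2*q) * s^(-q) * Ψ (s^2*b) := by
      rw [Real.rpow_sub (by norm_num : (0:ℝ) < 2), Real.rpow_neg hs0.le,
        Real.mul_rpow (by norm_num) hs0.le,
        show (2:ℝ)^q * ((2:ℝ)^q * s^q) = (2:ℝ)^(2*q) * s^q from by rw [← mul_assoc, h2q]]
      field_simp
    rw [← heq]
    refine div_le_div₀ (hpos _ (by positivity)).le hnum (by positivity) ?_
    have hb1 : (r+1)^q ≤ (2:ℝ)^q := Real.rpow_le_rpow hr1.le (by linarith) hq0.le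
    have hb2 : (r+s)^q ≤ (2*s)^q := Real.rpow_le_rpow hrs.le (by linarith) hq0.le
    exact mul_le_mul hb1 hb2 (Real.rpow_nonneg hrs.le _) (Real.rpow_nonneg (by norm_num) _)
  -- lower bound
  have hBvol : volume (Metric.closedBall (0:E) 1) ≠ ⊤ := measure_closedBall_lt_top.ne
  have hL : K₁ * (2:ℝ)^(2*γ₁'-2*q) * (volume (Metric.closedBall (0:E) 1)).toReal *
      (s^(-q) * Ψ (s^2*b)) ≤ ∫ u : E, f u := by
    have h1 : (K₁ * (2:ℝ)^(2*γ₁'-2*q) * s^(-q) * Ψ (s^2*b)) *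
        (volume (Metric.closedBall (0:E) 1)).toReal ≤ ∫ u in Metric.closedBall (0:E) 1, f u :=
      setIntegral_ge_of_const_le_real measurableSet_closedBall hBvol
        (fun u hu => hlo u (mem_closedBall_zero_iff.1 hu)) hfi.integrableOn
    calc K₁ * (2:ℝ)^(2*γ₁'-2*q) * (volume (Metric.closedBall (0:E) 1)).toReal *
          (s^(-q) * Ψ (s^2*b))
        = (K₁ * (2:ℝ)^(2*γ₁'-2*q) * s^(-q) * Ψ (s^2*b)) *
          (volume (Metric.closedBall (0:E) 1)).toReal := by ring
      _ ≤ ∫ u in Metric.closedBall (0:E) 1, f u := h1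
      _ ≤ ∫ u : E, f u := setIntegral_le_integral hfi (Filter.Eventually.of_forall hfnn)
  rw [hkereq]
  exact ⟨hL, hU⟩

set_option maxHeartbeats 1000000 in
/-- For every `M > 0` there is `c ≥ 1` such that
`h(a,b) ≍ a^{d+α} Ψ(b/a²)` for `0 < a < M`, `b > 0`, and `h(a,b) ≍ Ψ(b)` for `a ≥ M`,
`b > 0`. Here `d = n + 2 ≥ 2`. -/
theorem hker_estimates
    (n : ℕ) (α γ₁ γ₂ C₁ C₂ : ℝ) (Ψ : ℝ → ℝ)
    (hα : 0 < α) (hα2 : α < 2)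
    (hγ : γ₁ ≤ γ₂) (hγ₂ : γ₂ < min 1 α)
    (hC₁ : 0 < C₁) (hC₂ : 0 < C₂)
    (hmeas : Measurable Ψ)
    (hpos : ∀ t : ℝ, 0 ≤ t → 0 < Ψ t)
    (hflat : ∀ t : ℝ, 0 ≤ t → t < 2 → Ψ t = Ψ 2)
    (hscale : ∀ r R : ℝ, 2 ≤ r → r < R →
      C₁ * (R / r) ^ γ₁ ≤ Ψ R / Ψ r ∧ Ψ R / Ψ r ≤ C₂ * (R / r) ^ γ₂) :
    ∀ M : ℝ, 0 < M → ∃ c : ℝ, 1 ≤ c ∧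
      (∀ a b : ℝ, 0 < a → a < M → 0 < b →
        c⁻¹ * (a ^ ((n : ℝ) + 2 + α) * Ψ (b / a ^ 2)) ≤ hker n α Ψ a b ∧
        hker n α Ψ a b ≤ c * (a ^ ((n : ℝ) + 2 + α) * Ψ (b / a ^ 2))) ∧
      (∀ a b : ℝ, M ≤ a → 0 < b →
        c⁻¹ * Ψ b ≤ hker n α Ψ a b ∧ hker n α Ψ a b ≤ c * Ψ b) := by
  intro M hM
  have psiU := psi_upper' hC₂ hpos hflat (fun r R hr hrR => (hscale r R hr hrR).2)
  have psiL := psi_lower' hC₁ hpos hflat (fun r R hr hrR => (hscale r R hr hrR).1)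
  set q : ℝ := (n:ℝ) + 2 + α with hqdef
  have hq0 : 0 < q := by positivity
  set γ : ℝ := max γ₂ 0 with hγdef
  set γ₁' : ℝ := min γ₁ 0 with hγ₁'def
  set K : ℝ := max C₂ 1 with hKdef
  set K₁ : ℝ := min C₁ 1 with hK₁def
  have hK1 : 1 ≤ K := le_max_right _ _
  have hK0 : (0:ℝ) ≤ K := by linarith
  have hK₁0 : 0 < K₁ := lt_min hC₁ one_pos
  have hγ0 : 0 ≤ γ := le_max_right _ _
  have hγ₁'0 : γ₁' ≤ 0 := min_le_right _ _
  have hγlt1 : γ < 1 := max_lt (lt_of_lt_of_le hγ₂ (min_le_left _ _)) one_pos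
  have hγq : 2*γ ≤ q := by
    rw [hqdef]
    have : (0:ℝ) ≤ (n:ℝ) := Nat.cast_nonneg n
    linarith
  set I : ℝ := ∫ u : EuclideanSpace ℝ (Fin (n+1)), (1 + ‖u‖) ^ (-q) with hIdef
  have hI0 : 0 ≤ I := integral_nonneg fun u => Real.rpow_nonneg (by positivity) _
  set V : ℝ := (volume (Metric.closedBall (0 : EuclideanSpace ℝ (Fin (n+1))) 1)).toReal
    with hVdef
  have hV0 : 0 < V := by
    rw [hVdef]
    exact ENNReal.toReal_pos (Metric.measure_closedBall_pos volume _ one_pos).ne'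
      measure_closedBall_lt_top.ne
  set CL : ℝ := K₁ * (2:ℝ)^(2*γ₁'-2*q) * V with hCLdef
  set CU : ℝ := K * I with hCUdef
  have hCL0 : 0 < CL := by
    have h2 := Real.rpow_pos_of_pos (show (0:ℝ) < 2 by norm_num) (2*γ₁'-2*q)
    rw [hCLdef]; positivity
  have hCU0 : 0 ≤ CU := mul_nonneg hK0 hI0
  have core : ∀ a b : ℝ, 0 < a → 0 < b →
      CL * ((1+1/a)^(-q) * Ψ ((1+1/a)^2*b)) ≤ hker n α Ψ a b ∧
      hker n α Ψ a b ≤ CU * ((1+1/a)^(-q) * Ψ ((1+1/a)^2*b)) :=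
    fun a b ha hb => hker_core n Ψ hmeas hpos hK0 hγ0 hγq psiU hK₁0 hγ₁'0 psiL hα ha hb
  set cU1 : ℝ := CU * K * ((M+1)^2)^γ with hcU1def
  set cL1 : ℝ := CL * (M+1)^(-q) * K₁ * ((M+1)^2)^γ₁' with hcL1def
  set cU2 : ℝ := CU * K * ((1+1/M)^2)^γ with hcU2def
  set cL2 : ℝ := CL * (1+1/M)^(-q) * K₁ * ((1+1/M)^2)^γ₁' with hcL2def
  have hM1 : (0:ℝ) < M + 1 := by linarith
  have hM2 : (0:ℝ) < 1 + 1/M := by positivity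
  have hcL1 : 0 < cL1 := by
    have h1 := Real.rpow_pos_of_pos hM1 (-q)
    have h2 := Real.rpow_pos_of_pos (show (0:ℝ) < (M+1)^2 by positivity) γ₁'
    rw [hcL1def]; positivity
  have hcL2 : 0 < cL2 := by
    have h1 := Real.rpow_pos_of_pos hM2 (-q)
    have h2 := Real.rpow_pos_of_pos (show (0:ℝ) < (1+1/M)^2 by positivity) γ₁'
    rw [hcL2def]; positivity
  refine ⟨max 1 (max (max cU1 cU2) (max cL1⁻¹ cL2⁻¹)), le_max_left _ _, ?_, ?_⟩
  · -- case 0 < a < M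
    intro a b ha haM hb
    set c : ℝ := max 1 (max (max cU1 cU2) (max cL1⁻¹ cL2⁻¹)) with hcdef
    have hccL1 : c⁻¹ ≤ cL1 := by
      have h : cL1⁻¹ ≤ c :=
        le_trans (le_trans (le_max_left _ _) (le_max_right _ _)) (le_max_right _ _)
      calc c⁻¹ ≤ (cL1⁻¹)⁻¹ := inv_anti₀ (inv_pos.2 hcL1) h
        _ = cL1 := inv_inv _
    have hccU1 : cU1 ≤ c :=
      le_trans (le_trans (le_max_left _ _) (le_max_left _ _)) (le_max_right _ _)
    set s : ℝ := 1 + 1/a with hsdef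
    have hia : 0 < 1/a := one_div_pos.2 ha
    have hs1 : 1 ≤ s := by rw [hsdef]; linarith
    have hs0 : 0 < s := by linarith
    have hsb0 : 0 < s^2*b := by positivity
    have hba0 : 0 < b/a^2 := by positivity
    have hΨba := hpos _ hba0.le
    have hΨsb := hpos _ hsb0.le
    have haq0 : (0:ℝ) ≤ a^q := Real.rpow_nonneg ha.le _
    have hsaq : s^(-q) ≤ a^q := by
      have h1 : (1:ℝ)/a ≤ s := by rw [hsdef]; linarith
      have h2 : s^(-q) ≤ ((1:ℝ)/a)^(-q) :=
        Real.rpow_le_rpow_of_nonpos hia h1 (neg_nonpos.2 hq0.le)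
      have h3 : ((1:ℝ)/a)^(-q) = a^q := by
        rw [one_div, Real.rpow_neg (inv_nonneg.2 ha.le), Real.inv_rpow ha.le, inv_inv]
      linarith
    have hsaq' : (M+1)^(-q) * a^q ≤ s^(-q) := by
      have hsa : s * a = a + 1 := by rw [hsdef]; field_simp
      have h1 : s ≤ (M+1)/a := by
        rw [le_div_iff₀ ha, hsa]; linarith
      have h2 : ((M+1)/a)^(-q) ≤ s^(-q) :=
        Real.rpow_le_rpow_of_nonpos hs0 h1 (neg_nonpos.2 hq0.le)
      have h3 : ((M+1)/a)^(-q) = (M+1)^(-q) * a^q := by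
        rw [Real.div_rpow hM1.le ha.le, Real.rpow_neg ha.le q, div_eq_mul_inv, inv_inv]
      linarith
    have hba_le : b/a^2 ≤ s^2*b := by
      have e1 : b/a^2 = (1/a)^2*b := by field_simp
      have h4 : 1/a ≤ s := by rw [hsdef]; linarith
      rw [e1]
      exact mul_le_mul_of_nonneg_right (pow_le_pow_left₀ hia.le h4 2) hb.le
    have hratio : (s^2*b)/(b/a^2) = (a+1)^2 := by
      rw [hsdef]; field_simp
    have hpsi_up : Ψ (s^2*b) ≤ K * ((M+1)^2)^γ * Ψ (b/a^2) := by
      have h1 := psiU (b/a^2) (s^2*b) hba0 hba_le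
      rw [hratio] at h1
      have h2 : (((a+1)^2 : ℝ))^γ ≤ ((M+1)^2)^γ :=
        Real.rpow_le_rpow (by positivity) (pow_le_pow_left₀ (by linarith) (by linarith) 2) hγ0
      exact h1.trans (mul_le_mul_of_nonneg_right (mul_le_mul_of_nonneg_left h2 hK0) hΨba.le)
    have hpsi_lo : K₁ * ((M+1)^2)^γ₁' * Ψ (b/a^2) ≤ Ψ (s^2*b) := by
      have h1 := psiL (b/a^2) (s^2*b) hba0 hba_le
      rw [hratio] at h1
      have h2 : (((M+1)^2 : ℝ))^γ₁' ≤ ((a+1)^2)^γ₁' :=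
        Real.rpow_le_rpow_of_nonpos (by positivity)
          (pow_le_pow_left₀ (by linarith) (by linarith) 2) hγ₁'0
      exact le_trans
        (mul_le_mul_of_nonneg_right (mul_le_mul_of_nonneg_left h2 hK₁0.le) hΨba.le) h1
    obtain ⟨hlo, hup⟩ := core a b ha hb
    rw [← hsdef] at hlo hup
    constructor
    · have h5 : ((M+1)^(-q)*a^q) * (K₁*((M+1)^2)^γ₁' * Ψ (b/a^2)) ≤ s^(-q) * Ψ (s^2*b) :=
        mul_le_mul hsaq' hpsi_lo
          (mul_nonneg (mul_nonneg hK₁0.le (Real.rpow_nonneg (by positivity) _)) hΨba.le)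
          (Real.rpow_nonneg hs0.le _)
      calc c⁻¹ * (a^q * Ψ (b/a^2)) ≤ cL1 * (a^q * Ψ (b/a^2)) :=
            mul_le_mul_of_nonneg_right hccL1 (mul_nonneg haq0 hΨba.le)
        _ = CL * (((M+1)^(-q)*a^q) * (K₁*((M+1)^2)^γ₁' * Ψ (b/a^2))) := by
            rw [hcL1def]; ring
        _ ≤ CL * (s^(-q) * Ψ (s^2*b)) := mul_le_mul_of_nonneg_left h5 hCL0.le
        _ ≤ hker n α Ψ a b := hlo
    · have h5 : s^(-q) * Ψ (s^2*b) ≤ a^q * (K * ((M+1)^2)^γ * Ψ (b/a^2)) :=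
        mul_le_mul hsaq hpsi_up hΨsb.le haq0
      calc hker n α Ψ a b ≤ CU * (s^(-q) * Ψ (s^2*b)) := hup
        _ ≤ CU * (a^q * (K * ((M+1)^2)^γ * Ψ (b/a^2))) := mul_le_mul_of_nonneg_left h5 hCU0
        _ = cU1 * (a^q * Ψ (b/a^2)) := by rw [hcU1def]; ring
        _ ≤ c * (a^q * Ψ (b/a^2)) := mul_le_mul_of_nonneg_right hccU1 (mul_nonneg haq0 hΨba.le)
  · -- case M ≤ a
    intro a b hMa hb
    have ha : 0 < a := lt_of_lt_of_le hM hMa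
    set c : ℝ := max 1 (max (max cU1 cU2) (max cL1⁻¹ cL2⁻¹)) with hcdef
    have hccL2 : c⁻¹ ≤ cL2 := by
      have h : cL2⁻¹ ≤ c :=
        le_trans (le_trans (le_max_right _ _) (le_max_right _ _)) (le_max_right _ _)
      calc c⁻¹ ≤ (cL2⁻¹)⁻¹ := inv_anti₀ (inv_pos.2 hcL2) h
        _ = cL2 := inv_inv _
    have hccU2 : cU2 ≤ c :=
      le_trans (le_trans (le_max_right _ _) (le_max_left _ _)) (le_max_right _ _)
    set s : ℝ := 1 + 1/a with hsdef
    have hia : 0 < 1/a := one_div_pos.2 ha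
    have hs1 : 1 ≤ s := by rw [hsdef]; linarith
    have hs0 : 0 < s := by linarith
    have hsb0 : 0 < s^2*b := by positivity
    have hΨb := hpos b hb.le
    have hΨsb := hpos _ hsb0.le
    have hsM : s ≤ 1 + 1/M := by
      rw [hsdef]
      have := one_div_le_one_div_of_le hM hMa
      linarith
    have hs_upq : s^(-q) ≤ 1 :=
      Real.rpow_le_one_of_one_le_of_nonpos hs1 (neg_nonpos.2 hq0.le)
    have hs_lowq : (1+1/M)^(-q) ≤ s^(-q) :=
      Real.rpow_le_rpow_of_nonpos hs0 hsM (neg_nonpos.2 hq0.le)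
    have hs2one : (1:ℝ) ≤ s^2 := by
      have h1 : (1:ℝ)^2 ≤ s^2 := pow_le_pow_left₀ zero_le_one hs1 2
      rwa [one_pow] at h1
    have hb_le : b ≤ s^2*b := by
      have := mul_le_mul_of_nonneg_right hs2one hb.le
      linarith
    have hratio : (s^2*b)/b = s^2 := by field_simp
    have hs2M : s^2 ≤ (1+1/M)^2 := pow_le_pow_left₀ (by linarith) hsM 2
    have hpsi_up : Ψ (s^2*b) ≤ K * ((1+1/M)^2)^γ * Ψ b := by
      have h1 := psiU b (s^2*b) hb hb_le
      rw [hratio] at h1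
      have h2 : ((s^2 : ℝ))^γ ≤ ((1+1/M)^2)^γ :=
        Real.rpow_le_rpow (by positivity) hs2M hγ0
      exact h1.trans (mul_le_mul_of_nonneg_right (mul_le_mul_of_nonneg_left h2 hK0) hΨb.le)
    have hpsi_lo : K₁ * ((1+1/M)^2)^γ₁' * Ψ b ≤ Ψ (s^2*b) := by
      have h1 := psiL b (s^2*b) hb hb_le
      rw [hratio] at h1
      have h2 : (((1+1/M)^2 : ℝ))^γ₁' ≤ (s^2)^γ₁' :=
        Real.rpow_le_rpow_of_nonpos (by positivity) hs2M hγ₁'0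
      exact le_trans
        (mul_le_mul_of_nonneg_right (mul_le_mul_of_nonneg_left h2 hK₁0.le) hΨb.le) h1
    obtain ⟨hlo, hup⟩ := core a b ha hb
    rw [← hsdef] at hlo hup
    constructor
    · have h5 : ((1+1/M)^(-q)) * (K₁*((1+1/M)^2)^γ₁' * Ψ b) ≤ s^(-q) * Ψ (s^2*b) :=
        mul_le_mul hs_lowq hpsi_lo
          (mul_nonneg (mul_nonneg hK₁0.le (Real.rpow_nonneg (by positivity) _)) hΨb.le)
          (Real.rpow_nonneg hs0.le _)
      calc c⁻¹ * Ψ b ≤ cL2 * Ψ b := mul_le_mul_of_nonneg_right hccL2 hΨb.le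
        _ = CL * (((1+1/M)^(-q)) * (K₁*((1+1/M)^2)^γ₁' * Ψ b)) := by rw [hcL2def]; ring
        _ ≤ CL * (s^(-q) * Ψ (s^2*b)) := mul_le_mul_of_nonneg_left h5 hCL0.le
        _ ≤ hker n α Ψ a b := hlo
    · have h5 : s^(-q) * Ψ (s^2*b) ≤ 1 * (K * ((1+1/M)^2)^γ * Ψ b) :=
        mul_le_mul hs_upq hpsi_up hΨsb.le zero_le_one
      calc hker n α Ψ a b ≤ CU * (s^(-q) * Ψ (s^2*b)) := hup
        _ ≤ CU * (1 * (K * ((1+1/M)^2)^γ * Ψ b)) := mul_le_mul_of_nonneg_left h5 hCU0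
        _ = cU2 * Ψ b := by rw [hcU2def]; ring
        _ ≤ c * Ψ b := mul_le_mul_of_nonneg_right hccU2 hΨb.le
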